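/- Error bound for the three-part universal minimum-description decoder under random binning: Let X and Y be finite sets, let k ≥ 1 be an integer, and let R_x, R_y, ε₀ > 0 be reals. Let ℓ_J, ℓ_{x|y}, ℓ_{y|x} : X × Y → ℕ satisfy: (i) |{(x,y) : ℓ_J(x,y) = l}| ≤ 2^l for every l; (ii) for every fixed y ∈ Y, |{x : ℓ_{x|y}(x,y) = l}| ≤ 2^l for every l; (iii) for every fixed x ∈ X, |{y : ℓ_{y|x}(x,y) = l}| ≤ 2^l for every l. Define u(x,y) = min{ R_x − ℓ_{x|y}(x,y)/k, R_y − ℓ_{y|x}(x,y)/k, R_x + R_y − ℓ_J(x,y)/k }. Fix (x₀,y₀) ∈ X × Y with u(x₀,y₀) ≥ ε₀, and let M_x, M_y be integers with M_x ≥ 2^{k·R_x} and M_y ≥ 2^{k·R_y}. Let φ_x : X → Fin M_x and φ_y : Y → Fin M_y be independent uniformly random functions. Then the probability that there exists (x̃,ỹ) ≠ (x₀,y₀) with φ_x(x̃) = φ_x(x₀), φ_y(ỹ) = φ_y(y₀), and u(x̃,ỹ) ≥ u(x₀,y₀) is at most 6·2^{−k·ε₀}. -/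

import Mathlib

/-!
Split the competitors `(x̃, ỹ)` according to which coordinates differ from `(x₀, y₀)`.
One differing only in `x` collides with probability `1 / M_x`, and `u(x̃, y₀) ≥ u(x₀, y₀) ≥ ε₀`
forces `ℓ_{x|y}(x̃, y₀) ≤ k (R_x - ε₀)`; a lossless length function has at most
`2 · 2^{k (R_x - ε₀)} ≤ 2 M_x 2^{-k ε₀}` such arguments, so the union bound over them gives
`2 · 2^{-k ε₀}`. The other two types are handled in the same way with `M_y` and `M_x M_y`.
-/

open Finset

section UniformProb

variable {Ω α β : Type*} [Fintype Ω] [Fintype α] [Fintype β]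

-- `0` when `Ω` is empty, which is why the marginal bounds below are only inequalities.
open scoped Classical in
noncomputable def uniformProb (E : Ω → Prop) : ℝ := #{ω | E ω} / Fintype.card Ω

theorem uniformProb_eq (E : Ω → Prop) [DecidablePred E] :
    uniformProb E = #{ω | E ω} / Fintype.card Ω := by
  unfold uniformProb
  congr

theorem uniformProb_nonneg (E : Ω → Prop) : 0 ≤ uniformProb E := by
  unfold uniformProb
  positivity

theorem uniformProb_le_one (E : Ω → Prop) : uniformProb E ≤ 1 := by
  classical
  rw [uniformProb_eq]
  exact div_le_one_of_le₀ (mod_cast (card_filter_le _ _).trans_eq card_univ) (Nat.cast_nonneg _)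

theorem uniformProb_mono {E F : Ω → Prop} (h : ∀ ω, E ω → F ω) :
    uniformProb E ≤ uniformProb F := by
  classical
  rw [uniformProb_eq, uniformProb_eq]
  gcongr
  exact h _

theorem uniformProb_or_le (E F : Ω → Prop) :
    uniformProb (fun ω => E ω ∨ F ω) ≤ uniformProb E + uniformProb F := by
  classical
  rw [uniformProb_eq, uniformProb_eq, uniformProb_eq, ← add_div, filter_or]
  gcongr
  exact_mod_cast card_union_le _ _

theorem uniformProb_exists_le {ι : Type*} (s : Finset ι) (E : ι → Ω → Prop) :
    uniformProb (fun ω => ∃ i ∈ s, E i ω) ≤ ∑ i ∈ s, uniformProb (E i) := by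
  classical
  simp only [uniformProb_eq, ← sum_div]
  gcongr
  exact_mod_cast
    calc #{ω | ∃ i ∈ s, E i ω} = #(s.biUnion fun i => {ω | E i ω}) := by
          congr 1; ext ω; simp
      _ ≤ _ := card_biUnion_le

theorem uniformProb_prod (P : α → Prop) (Q : β → Prop) :
    uniformProb (fun ω : α × β => P ω.1 ∧ Q ω.2) = uniformProb P * uniformProb Q := by
  classical
  rw [uniformProb_eq, uniformProb_eq, uniformProb_eq, ← univ_product_univ, filter_product,
    card_product, Fintype.card_prod, Nat.cast_mul, Nat.cast_mul, mul_div_mul_comm]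

theorem uniformProb_comp_fst_le (P : α → Prop) :
    uniformProb (fun ω : α × β => P ω.1) ≤ uniformProb P := by
  have h := uniformProb_prod P fun _ : β => True
  simp only [and_true] at h
  exact h ▸ mul_le_of_le_one_right (uniformProb_nonneg P) (uniformProb_le_one _)

theorem uniformProb_comp_snd_le (Q : β → Prop) :
    uniformProb (fun ω : α × β => Q ω.2) ≤ uniformProb Q := by
  have h := uniformProb_prod (fun _ : α => True) Q
  simp only [true_and] at h
  exact h ▸ mul_le_of_le_one_left (uniformProb_nonneg Q) (uniformProb_le_one _)

end UniformProb

section RandomBinning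

variable {A X Y β γ : Type*} [Fintype A] [DecidableEq A] [Fintype X] [Fintype Y]
  [Fintype β] [Fintype γ]

theorem natCard_apply_eq_apply {a b : A} (hab : a ≠ b) :
    Nat.card {f : A → β // f a = f b} = Fintype.card β ^ (Fintype.card A - 1) := by
  let e : {f : A → β // f a = f b} ≃ ({x : A // x ≠ a} → β) :=
    { toFun := fun f x => f.1 x.1
      invFun := fun g => ⟨fun x => if h : x = a then g ⟨b, hab.symm⟩ else g ⟨x, h⟩, by
        simp [hab.symm]⟩
      left_inv := fun f => by
        ext x
        by_cases h : x = a
        · subst h; simp [f.2]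
        · simp [h]
      right_inv := fun g => by
        ext x
        simp [x.2] }
  rw [Nat.card_congr e, Nat.card_eq_fintype_card, Fintype.card_fun, Fintype.card_subtype_compl,
    Fintype.card_subtype_eq]

theorem uniformProb_apply_eq_apply {a b : A} (hab : a ≠ b) :
    uniformProb (fun f : A → β => f a = f b) = (Fintype.card β : ℝ)⁻¹ := by
  classical
  obtain ⟨n, hn⟩ := Nat.exists_eq_succ_of_ne_zero (Fintype.card_pos_iff.2 ⟨a⟩).ne'
  rw [uniformProb_eq, ← Fintype.card_subtype, ← Nat.card_eq_fintype_card,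
    natCard_apply_eq_apply hab, Fintype.card_fun, hn, Nat.succ_sub_one, Nat.cast_pow,
    Nat.cast_pow, pow_succ]
  rcases eq_or_ne (Fintype.card β : ℝ) 0 with hβ | hβ
  · simp [hβ]
  · exact div_mul_cancel_left₀ (pow_ne_zero _ hβ) _

theorem uniformProb_exists_apply_eq_le (s : Finset A) (a : A) (ha : a ∉ s) :
    uniformProb (fun f : A → β => ∃ x ∈ s, f x = f a) ≤ #s / Fintype.card β := by
  refine (uniformProb_exists_le s _).trans_eq ?_
  rw [sum_congr rfl fun x hx => uniformProb_apply_eq_apply (ne_of_mem_of_not_mem hx ha),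
    sum_const, nsmul_eq_mul, div_eq_mul_inv]

theorem uniformProb_binning_collision_le [DecidableEq X] [DecidableEq Y] (G : X × Y → Prop)
    [DecidablePred G] (x₀ : X) (y₀ : Y) :
    uniformProb (fun φ : (X → β) × (Y → γ) =>
        ∃ p, p ≠ (x₀, y₀) ∧ φ.1 p.1 = φ.1 x₀ ∧ φ.2 p.2 = φ.2 y₀ ∧ G p) ≤
      #{x | x ≠ x₀ ∧ G (x, y₀)} / Fintype.card β + #{y | y ≠ y₀ ∧ G (x₀, y)} / Fintype.card γ +
        #{p : X × Y | p.1 ≠ x₀ ∧ p.2 ≠ y₀ ∧ G p} / (Fintype.card β * Fintype.card γ) := by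
  set S₁ : Finset X := {x | x ≠ x₀ ∧ G (x, y₀)}
  set S₂ : Finset Y := {y | y ≠ y₀ ∧ G (x₀, y)}
  set S₃ : Finset (X × Y) := {p | p.1 ≠ x₀ ∧ p.2 ≠ y₀ ∧ G p}
  have hsplit : ∀ φ : (X → β) × (Y → γ),
      (∃ p, p ≠ (x₀, y₀) ∧ φ.1 p.1 = φ.1 x₀ ∧ φ.2 p.2 = φ.2 y₀ ∧ G p) →
        (∃ x ∈ S₁, φ.1 x = φ.1 x₀) ∨ (∃ y ∈ S₂, φ.2 y = φ.2 y₀) ∨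
          ∃ p ∈ S₃, φ.1 p.1 = φ.1 x₀ ∧ φ.2 p.2 = φ.2 y₀ := by
    rintro φ ⟨⟨x, y⟩, hne, hx, hy, hG⟩
    by_cases hx₀ : x = x₀ <;> by_cases hy₀ : y = y₀
    · simp_all
    · exact .inr (.inl ⟨y, by simp_all [S₂], hy⟩)
    · exact .inl ⟨x, by simp_all [S₁], hx⟩
    · exact .inr (.inr ⟨(x, y), by simp_all [S₃], hx, hy⟩)
  have h₁ : uniformProb (fun φ : (X → β) × (Y → γ) => ∃ x ∈ S₁, φ.1 x = φ.1 x₀) ≤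
      #S₁ / Fintype.card β :=
    (uniformProb_comp_fst_le fun f : X → β => ∃ x ∈ S₁, f x = f x₀).trans
      (uniformProb_exists_apply_eq_le S₁ x₀ (by simp [S₁]))
  have h₂ : uniformProb (fun φ : (X → β) × (Y → γ) => ∃ y ∈ S₂, φ.2 y = φ.2 y₀) ≤
      #S₂ / Fintype.card γ :=
    (uniformProb_comp_snd_le fun g : Y → γ => ∃ y ∈ S₂, g y = g y₀).trans
      (uniformProb_exists_apply_eq_le S₂ y₀ (by simp [S₂]))
  have h₃ : uniformProb (fun φ : (X → β) × (Y → γ) =>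
      ∃ p ∈ S₃, φ.1 p.1 = φ.1 x₀ ∧ φ.2 p.2 = φ.2 y₀) ≤
        #S₃ / (Fintype.card β * Fintype.card γ) := by
    refine (uniformProb_exists_le S₃ _).trans_eq ?_
    have hterm : ∀ p ∈ S₃, uniformProb (fun φ : (X → β) × (Y → γ) =>
        φ.1 p.1 = φ.1 x₀ ∧ φ.2 p.2 = φ.2 y₀) = (Fintype.card β : ℝ)⁻¹ * (Fintype.card γ : ℝ)⁻¹ := by
      intro p hp
      have hp' := (mem_filter.1 hp).2
      rw [uniformProb_prod (fun f : X → β => f p.1 = f x₀) fun g : Y → γ => g p.2 = g y₀,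
        uniformProb_apply_eq_apply hp'.1, uniformProb_apply_eq_apply hp'.2.1]
    rw [sum_congr rfl hterm, sum_const, nsmul_eq_mul, div_eq_mul_inv, mul_inv]
  refine (uniformProb_mono hsplit).trans <| (uniformProb_or_le _ _).trans ?_
  grw [uniformProb_or_le, h₁, h₂, h₃, add_assoc]

end RandomBinning

def IsLosslessLength {A : Type*} [Fintype A] (L : A → ℕ) : Prop :=
  ∀ l : ℕ, #{a | L a = l} ≤ 2 ^ l

namespace IsLosslessLength

variable {A : Type*} [Fintype A] {L : A → ℕ}

theorem card_le (hL : IsLosslessLength L) {C : ℝ} {s : Finset A}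
    (hs : ∀ a ∈ s, (L a : ℝ) ≤ C) : (#s : ℝ) ≤ 2 * 2 ^ C := by
  classical
  rcases s.eq_empty_or_nonempty with rfl | ⟨a, ha⟩
  · simp only [card_empty, Nat.cast_zero]
    positivity
  have hC : 0 ≤ C := (Nat.cast_nonneg _).trans (hs a ha)
  have hsub : s ⊆ (range (⌊C⌋₊ + 1)).biUnion fun l => {a | L a = l} := fun a ha => by
    simpa using Nat.lt_succ_of_le (Nat.le_floor (hs a ha))
  have hcount : #s < 2 ^ (⌊C⌋₊ + 1) :=
    calc #s ≤ ∑ l ∈ range (⌊C⌋₊ + 1), #{a | L a = l} := (card_le_card hsub).trans card_biUnion_le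
      _ ≤ ∑ l ∈ range (⌊C⌋₊ + 1), 2 ^ l := sum_le_sum fun l _ => hL l
      _ < 2 ^ (⌊C⌋₊ + 1) := Nat.geomSum_lt le_rfl fun l hl => mem_range.1 hl
  calc (#s : ℝ) ≤ 2 ^ (⌊C⌋₊ + 1) := mod_cast hcount.le
    _ = 2 * 2 ^ (⌊C⌋₊ : ℝ) := by rw [pow_succ', Real.rpow_natCast]
    _ ≤ 2 * 2 ^ C := by gcongr; exacts [one_le_two, Nat.floor_le hC]

theorem card_div_le (hL : IsLosslessLength L) {k R ε M : ℝ} (hk : 0 < k) (hM : 2 ^ (k * R) ≤ M)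
    {s : Finset A} (hs : ∀ a ∈ s, ε ≤ R - L a / k) : (#s : ℝ) / M ≤ 2 * 2 ^ (-k * ε) := by
  have hM₀ : 0 < M := (Real.rpow_pos_of_pos two_pos _).trans_le hM
  have hcard : (#s : ℝ) ≤ 2 * 2 ^ (k * (R - ε)) := hL.card_le fun a ha => by
    have := hs a ha
    rw [le_sub_comm, div_le_iff₀ hk] at this
    linarith
  rw [div_le_iff₀ hM₀]
  calc (#s : ℝ) ≤ 2 * (2 ^ (k * R) * 2 ^ (-k * ε)) := by
        rwa [← Real.rpow_add two_pos, show k * R + -k * ε = k * (R - ε) by ring]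
    _ ≤ 2 * 2 ^ (-k * ε) * M := by nlinarith [Real.rpow_pos_of_pos two_pos (-k * ε)]

end IsLosslessLength

open scoped Classical in
theorem universal_decoder_error_bound_general (X Y : Type*) [Fintype X] [Fintype Y]
    (k : ℕ) (hk : 1 ≤ k) (Rx Ry ε₀ : ℝ)
    (ℓJ ℓxy ℓyx : X × Y → ℕ)
    (hJ : ∀ l : ℕ, (Finset.univ.filter fun p : X × Y => ℓJ p = l).card ≤ 2 ^ l)
    (hxy : ∀ (y : Y) (l : ℕ),
      (Finset.univ.filter fun x : X => ℓxy (x, y) = l).card ≤ 2 ^ l)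
    (hyx : ∀ (x : X) (l : ℕ),
      (Finset.univ.filter fun y : Y => ℓyx (x, y) = l).card ≤ 2 ^ l)
    (u : X × Y → ℝ)
    (hu : ∀ p : X × Y, u p =
      min (Rx - (ℓxy p : ℝ) / k)
        (min (Ry - (ℓyx p : ℝ) / k) (Rx + Ry - (ℓJ p : ℝ) / k)))
    (x₀ : X) (y₀ : Y) (hu₀ : ε₀ ≤ u (x₀, y₀)) (Mx My : ℕ)
    (hMx : (2 : ℝ) ^ ((k : ℝ) * Rx) ≤ (Mx : ℝ))
    (hMy : (2 : ℝ) ^ ((k : ℝ) * Ry) ≤ (My : ℝ)) :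
    ((Finset.univ.filter fun φ : (X → Fin Mx) × (Y → Fin My) =>
        ∃ p : X × Y, p ≠ (x₀, y₀) ∧ φ.1 p.1 = φ.1 x₀ ∧ φ.2 p.2 = φ.2 y₀ ∧
          u (x₀, y₀) ≤ u p).card : ℝ) /
      (Fintype.card ((X → Fin Mx) × (Y → Fin My))) ≤
      6 * (2 : ℝ) ^ (-(k : ℝ) * ε₀) := by
  have hk₀ : (0 : ℝ) < k := by exact_mod_cast hk
  have hMxy : (2 : ℝ) ^ ((k : ℝ) * (Rx + Ry)) ≤ Mx * My := by
    rw [mul_add, Real.rpow_add two_pos]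
    exact mul_le_mul hMx hMy (by positivity) (by positivity)
  have hrates : ∀ p, u (x₀, y₀) ≤ u p → ε₀ ≤ Rx - ℓxy p / k ∧ ε₀ ≤ Ry - ℓyx p / k ∧
      ε₀ ≤ Rx + Ry - ℓJ p / k := fun p hp => by
    simpa only [hu, le_min_iff] using hu₀.trans hp
  have h₁ := IsLosslessLength.card_div_le (hxy y₀) hk₀ hMx
    (s := {x | x ≠ x₀ ∧ u (x₀, y₀) ≤ u (x, y₀)}) fun x hx => (hrates _ (mem_filter.1 hx).2.2).1
  have h₂ := IsLosslessLength.card_div_le (hyx x₀) hk₀ hMy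
    (s := {y | y ≠ y₀ ∧ u (x₀, y₀) ≤ u (x₀, y)}) fun y hy => (hrates _ (mem_filter.1 hy).2.2).2.1
  have h₃ := IsLosslessLength.card_div_le hJ hk₀ hMxy
    (s := {p | p.1 ≠ x₀ ∧ p.2 ≠ y₀ ∧ u (x₀, y₀) ≤ u p})
    fun p hp => (hrates _ (mem_filter.1 hp).2.2.2).2.2
  rw [← uniformProb_eq]
  refine (uniformProb_binning_collision_le (fun p => u (x₀, y₀) ≤ u p) x₀ y₀).trans ?_
  simp only [Fintype.card_fin]
  linarith

open scoped Classical in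
/-- Error bound for the three-part universal minimum-description decoder under
random binning. The decoding metric is
`u(x,y) = min {R_x − ℓ_{x|y}(x,y)/k, R_y − ℓ_{y|x}(x,y)/k, R_x + R_y − ℓ_J(x,y)/k}`,
and the probability (under independent uniformly random binnings) that some
`(x̃, ỹ) ≠ (x₀, y₀)` consistent with both bins has `u(x̃, ỹ) ≥ u(x₀, y₀)`
is at most `6 · 2^{−k·ε₀}`. -/
theorem universal_decoder_error_bound (X Y : Type*) [Fintype X] [Fintype Y]
    (k : ℕ) (hk : 1 ≤ k) (Rx Ry ε₀ : ℝ)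
    (hRx : 0 < Rx) (hRy : 0 < Ry) (hε₀ : 0 < ε₀)
    (ℓJ ℓxy ℓyx : X × Y → ℕ)
    (hJ : ∀ l : ℕ, (Finset.univ.filter fun p : X × Y => ℓJ p = l).card ≤ 2 ^ l)
    (hxy : ∀ (y : Y) (l : ℕ),
      (Finset.univ.filter fun x : X => ℓxy (x, y) = l).card ≤ 2 ^ l)
    (hyx : ∀ (x : X) (l : ℕ),
      (Finset.univ.filter fun y : Y => ℓyx (x, y) = l).card ≤ 2 ^ l)
    (u : X × Y → ℝ)
    (hu : ∀ p : X × Y, u p =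
      min (Rx - (ℓxy p : ℝ) / k)
        (min (Ry - (ℓyx p : ℝ) / k) (Rx + Ry - (ℓJ p : ℝ) / k)))
    (x₀ : X) (y₀ : Y) (hu₀ : ε₀ ≤ u (x₀, y₀)) (Mx My : ℕ)
    (hMx : (2 : ℝ) ^ ((k : ℝ) * Rx) ≤ (Mx : ℝ))
    (hMy : (2 : ℝ) ^ ((k : ℝ) * Ry) ≤ (My : ℝ)) :
    ((Finset.univ.filter fun φ : (X → Fin Mx) × (Y → Fin My) =>
        ∃ p : X × Y, p ≠ (x₀, y₀) ∧ φ.1 p.1 = φ.1 x₀ ∧ φ.2 p.2 = φ.2 y₀ ∧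
          u (x₀, y₀) ≤ u p).card : ℝ) /
      (Fintype.card ((X → Fin Mx) × (Y → Fin My))) ≤
      6 * (2 : ℝ) ^ (-(k : ℝ) * ε₀) :=
  universal_decoder_error_bound_general X Y k hk Rx Ry ε₀ ℓJ ℓxy ℓyx hJ hxy hyx u hu x₀ y₀ hu₀ Mx My
    hMx hMy
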